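/- For every p ∈ (1, ∞), the second derivative of Q_p(q) := 2E_{1,p}(q)/K_{1,p}(q) - 1 at q = 0 equals 4p/(2 - 3p); in particular it is negative and strictly increasing in p. -/

import Mathlib

/-!
Writing `w(z) = (1 - z²)^(-1/p)`, differentiation under the integral sign gives
`K₁' = q ∫ z² (1 - q²z²)^(-3/2) w` and `E₁' = -q ∫ z² (1 - q²z²)^(-1/2) w`, so `Q_p'(q) = q R(q)` with
`R` continuous at `0`. Hence `Q_p''(0) = R(0) = -4B/A` with `A = ∫₀¹ w` and `B = ∫₀¹ z² w`.
Integrating `d/dz [z (1 - z²)^(1 - 1/p)] = w - (3 - 2/p) z² w` over `[0, 1]` gives `A = (3 - 2/p) B`,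
so `Q_p''(0) = -4p / (3p - 2)`.
-/

open Real

/-- The complete `p`-elliptic integral of the first kind. -/
noncomputable def K1 (p q : ℝ) : ℝ :=
  ∫ z in (0:ℝ)..1, (1 - q ^ 2 * z ^ 2) ^ (-(1/2) : ℝ) * (1 - z ^ 2) ^ (-(1 / p))

/-- The complete `p`-elliptic integral of the second kind. -/
noncomputable def E1 (p q : ℝ) : ℝ :=
  ∫ z in (0:ℝ)..1, (1 - q ^ 2 * z ^ 2) ^ ((1/2) : ℝ) * (1 - z ^ 2) ^ (-(1 / p))

/-- The ratio function `Q_p`. -/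
noncomputable def Qp (p q : ℝ) : ℝ := 2 * E1 p q / K1 p q - 1

open MeasureTheory Set Filter Topology intervalIntegral

/-- `K1 p` and `E1 p` are the members `k = 0`, `e = ∓1/2`, `a = -1/p`; differentiating in `q` lowers
`e` by one and raises `k` by two. -/
noncomputable def ellipticMoment (a e : ℝ) (k : ℕ) (q : ℝ) : ℝ :=
  ∫ z in (0:ℝ)..1, z ^ k * (1 - q ^ 2 * z ^ 2) ^ e * (1 - z ^ 2) ^ a

section ellipticMoment

variable {a : ℝ}

lemma intervalIntegrable_one_sub_sq_rpow (ha : -1 < a) :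
    IntervalIntegrable (fun z : ℝ => (1 - z ^ 2) ^ a) volume 0 1 := by
  have hsub : IntervalIntegrable (fun z : ℝ => (1 - z) ^ a) volume 0 1 := by
    simpa using ((intervalIntegrable_rpow' (a := 0) (b := 1) ha).comp_sub_left 1).symm
  have hadd : ContinuousOn (fun z : ℝ => (1 + z) ^ a) (uIcc 0 1) := by
    refine ContinuousOn.rpow_const (by fun_prop) fun z hz => Or.inl ?_
    rw [uIcc_of_le zero_le_one] at hz
    linarith [hz.1]
  refine (hsub.mul_continuousOn hadd).congr fun z hz => ?_
  rw [uIoc_of_le zero_le_one] at hz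
  rw [← mul_rpow (by linarith [hz.2]) (by linarith [hz.1])]
  ring_nf

lemma rpow_le_max_of_mem_Icc {c u e : ℝ} (hc : 0 < c) (hu : u ∈ Icc c 1) :
    u ^ e ≤ max (c ^ e) 1 := by
  rcases le_or_gt 0 e with he | he
  · exact (rpow_le_one (hc.le.trans hu.1) hu.2 he).trans (le_max_right _ _)
  · exact (rpow_le_rpow_of_nonpos hc hu.1 he.le).trans (le_max_left _ _)

lemma one_sub_sq_mul_sq_mem_Icc {x z : ℝ} (hx : |x| < 1 / 2) (hz : z ∈ Icc (0:ℝ) 1) :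
    1 - x ^ 2 * z ^ 2 ∈ Icc (3 / 4 : ℝ) 1 := by
  have hx2 : x ^ 2 < 1 / 4 := by nlinarith [sq_abs x, abs_nonneg x]
  have hz2 : z ^ 2 ≤ 1 := by nlinarith [hz.1, hz.2]
  constructor <;> nlinarith [sq_nonneg x, sq_nonneg z]

lemma norm_moment_integrand_le {e x z : ℝ} (k : ℕ) (hx : |x| < 1 / 2) (hz : z ∈ Icc (0:ℝ) 1) :
    ‖z ^ k * (1 - x ^ 2 * z ^ 2) ^ e * (1 - z ^ 2) ^ a‖ ≤
      max ((3 / 4 : ℝ) ^ e) 1 * (1 - z ^ 2) ^ a := by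
  have hu := one_sub_sq_mul_sq_mem_Icc hx hz
  have hw : 0 ≤ (1 - z ^ 2) ^ a := rpow_nonneg (by nlinarith [hz.1, hz.2]) _
  have hue : 0 ≤ (1 - x ^ 2 * z ^ 2) ^ e := rpow_nonneg (by linarith [hu.1]) _
  rw [norm_of_nonneg (by have := pow_nonneg hz.1 k; positivity)]
  gcongr
  calc z ^ k * (1 - x ^ 2 * z ^ 2) ^ e ≤ 1 * max ((3 / 4 : ℝ) ^ e) 1 := by
        gcongr
        · exact pow_le_one₀ hz.1 hz.2
        · exact rpow_le_max_of_mem_Icc (by norm_num) hu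
    _ = max ((3 / 4 : ℝ) ^ e) 1 := one_mul _

lemma intervalIntegrable_moment_integrand (ha : -1 < a) (e : ℝ) (k : ℕ) {q : ℝ}
    (hq : |q| < 1 / 2) :
    IntervalIntegrable (fun z : ℝ => z ^ k * (1 - q ^ 2 * z ^ 2) ^ e * (1 - z ^ 2) ^ a)
      volume 0 1 := by
  refine ((intervalIntegrable_one_sub_sq_rpow ha).const_mul (max ((3 / 4 : ℝ) ^ e) 1)).mono_fun
    (by fun_prop : Measurable fun z : ℝ =>
      z ^ k * (1 - q ^ 2 * z ^ 2) ^ e * (1 - z ^ 2) ^ a).aestronglyMeasurable ?_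
  filter_upwards [ae_restrict_mem measurableSet_uIoc] with z hz
  rw [uIoc_of_le zero_le_one] at hz
  exact (norm_moment_integrand_le k hq (Ioc_subset_Icc_self hz)).trans (le_abs_self _)

lemma hasDerivAt_moment_integrand {e x z : ℝ} (k : ℕ) (h : 0 < 1 - x ^ 2 * z ^ 2) :
    HasDerivAt (fun q : ℝ => z ^ k * (1 - q ^ 2 * z ^ 2) ^ e * (1 - z ^ 2) ^ a)
      (-2 * e * x * (z ^ (k + 2) * (1 - x ^ 2 * z ^ 2) ^ (e - 1) * (1 - z ^ 2) ^ a)) x := by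
  have hbase : HasDerivAt (fun q : ℝ => 1 - q ^ 2 * z ^ 2) (-(2 * x * z ^ 2)) x := by
    simpa using ((hasDerivAt_pow 2 x).mul_const (z ^ 2)).const_sub 1
  exact (((hbase.rpow_const (p := e) (Or.inl h.ne')).const_mul (z ^ k)).mul_const
    ((1 - z ^ 2) ^ a)).congr_deriv (by ring)

lemma hasDerivAt_ellipticMoment (ha : -1 < a) (e : ℝ) (k : ℕ) {q : ℝ} (hq : |q| < 1 / 2) :
    HasDerivAt (ellipticMoment a e k) (-2 * e * q * ellipticMoment a (e - 1) (k + 2) q) q := by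
  have hball : Metric.ball (0:ℝ) (1 / 2) ∈ 𝓝 q := Metric.isOpen_ball.mem_nhds (by simpa using hq)
  have key := hasDerivAt_integral_of_dominated_loc_of_deriv_le (μ := volume) (a := 0) (b := 1)
    (F := fun q z => z ^ k * (1 - q ^ 2 * z ^ 2) ^ e * (1 - z ^ 2) ^ a)
    (F' := fun q z => -2 * e * q * (z ^ (k + 2) * (1 - q ^ 2 * z ^ 2) ^ (e - 1) * (1 - z ^ 2) ^ a))
    (bound := fun z => |e| * (max ((3 / 4 : ℝ) ^ (e - 1)) 1 * (1 - z ^ 2) ^ a)) hball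
    (Eventually.of_forall fun x => (by fun_prop : Measurable fun z : ℝ =>
      z ^ k * (1 - x ^ 2 * z ^ 2) ^ e * (1 - z ^ 2) ^ a).aestronglyMeasurable)
    (intervalIntegrable_moment_integrand ha e k hq)
    (by fun_prop : Measurable fun z : ℝ => -2 * e * q *
      (z ^ (k + 2) * (1 - q ^ 2 * z ^ 2) ^ (e - 1) * (1 - z ^ 2) ^ a)).aestronglyMeasurable
    ?_ ((intervalIntegrable_one_sub_sq_rpow ha).const_mul _ |>.const_mul _) ?_
  · unfold ellipticMoment
    rw [← intervalIntegral.integral_const_mul]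
    exact key.2
  all_goals refine Eventually.of_forall fun z hz x hx => ?_
  all_goals
    rw [uIoc_of_le zero_le_one] at hz
    have hx' : |x| < 1 / 2 := by simpa using hx
  · have h2ex : ‖-2 * e * x‖ ≤ |e| := by
      rw [norm_mul, norm_mul, norm_neg, Real.norm_eq_abs, Real.norm_eq_abs, Real.norm_eq_abs,
        abs_two]
      nlinarith [abs_nonneg e, abs_nonneg x]
    rw [norm_mul]
    exact mul_le_mul h2ex (norm_moment_integrand_le _ hx' (Ioc_subset_Icc_self hz))
      (norm_nonneg _) (abs_nonneg e)
  · exact hasDerivAt_moment_integrand k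
      (by linarith [(one_sub_sq_mul_sq_mem_Icc hx' (Ioc_subset_Icc_self hz)).1])

lemma ellipticMoment_pos (ha : -1 < a) (e : ℝ) (k : ℕ) {q : ℝ} (hq : |q| < 1 / 2) :
    0 < ellipticMoment a e k q := by
  refine intervalIntegral_pos_of_pos_on (intervalIntegrable_moment_integrand ha e k hq)
    (fun z hz => ?_) zero_lt_one
  have hu := one_sub_sq_mul_sq_mem_Icc hq (Ioo_subset_Icc_self hz)
  have hw : 0 < 1 - z ^ 2 := by nlinarith [hz.1, hz.2]
  have := pow_pos hz.1 k
  have := rpow_pos_of_pos (by linarith [hu.1] : (0:ℝ) < 1 - q ^ 2 * z ^ 2) e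
  have := rpow_pos_of_pos hw a
  positivity

lemma ellipticMoment_at_zero (a e : ℝ) (k : ℕ) :
    ellipticMoment a e k 0 = ∫ z in (0:ℝ)..1, z ^ k * (1 - z ^ 2) ^ a := by
  simp [ellipticMoment]

lemma integral_one_sub_sq_rpow (ha : -1 < a) :
    ∫ z in (0:ℝ)..1, (1 - z ^ 2) ^ a = (2 * a + 3) * ∫ z in (0:ℝ)..1, z ^ 2 * (1 - z ^ 2) ^ a := by
  have hA := intervalIntegrable_one_sub_sq_rpow ha
  have hB : IntervalIntegrable (fun z : ℝ => z ^ 2 * (1 - z ^ 2) ^ a) volume 0 1 := by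
    simpa using intervalIntegrable_moment_integrand ha 0 2 (q := 0) (by norm_num)
  have ha1 : 0 < a + 1 := by linarith
  have hftc : ∫ z in (0:ℝ)..1, ((1 - z ^ 2) ^ a - (2 * a + 3) * (z ^ 2 * (1 - z ^ 2) ^ a)) =
      1 * (1 - 1 ^ 2) ^ (a + 1) - 0 * (1 - 0 ^ 2) ^ (a + 1) := by
    refine integral_eq_sub_of_hasDeriv_right_of_le zero_le_one
      (f := fun z : ℝ => z * (1 - z ^ 2) ^ (a + 1))
      (ContinuousOn.mul continuousOn_id
        (ContinuousOn.rpow_const (by fun_prop) fun _ _ => Or.inr ha1.le))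
      (fun z hz => ?_) (hA.sub (hB.const_mul _))
    have hw : 0 < 1 - z ^ 2 := by nlinarith [hz.1, hz.2]
    have hbase : HasDerivAt (fun z : ℝ => 1 - z ^ 2) (-(2 * z)) z := by
      simpa using (hasDerivAt_pow 2 z).const_sub 1
    refine (((hasDerivAt_id z).mul (hbase.rpow_const (p := a + 1) (Or.inl hw.ne'))).congr_deriv
      ?_).hasDerivWithinAt
    rw [add_sub_cancel_right, rpow_add_one hw.ne']
    simp only [id]
    ring
  rw [integral_sub hA (hB.const_mul _), intervalIntegral.integral_const_mul] at hftc
  norm_num [zero_rpow ha1.ne'] at hftc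
  linarith

end ellipticMoment

lemma iteratedDeriv_two_eq_of_hasDerivAt_mul {f R : ℝ → ℝ}
    (hf : ∀ᶠ q in 𝓝 0, HasDerivAt f (q * R q) q) (hR : ContinuousAt R 0) :
    iteratedDeriv 2 f 0 = R 0 := by
  have hderiv : deriv f =ᶠ[𝓝 0] fun q => q * R q := hf.mono fun q hq => hq.deriv
  have hslope : HasDerivAt (fun q => q * R q) (R 0) 0 := by
    rw [hasDerivAt_iff_tendsto_slope]
    refine (hR.tendsto.mono_left nhdsWithin_le_nhds).congr' ?_
    filter_upwards [self_mem_nhdsWithin] with q hq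
    rw [slope_def_field, zero_mul, sub_zero, sub_zero, mul_div_cancel_left₀ _ hq]
  rw [iteratedDeriv_succ, iteratedDeriv_one, hderiv.deriv_eq, hslope.deriv]

lemma K1_eq_ellipticMoment (p : ℝ) : K1 p = ellipticMoment (-(1 / p)) (-(1 / 2)) 0 := by
  ext q
  simp [K1, ellipticMoment]

lemma E1_eq_ellipticMoment (p : ℝ) : E1 p = ellipticMoment (-(1 / p)) (1 / 2) 0 := by
  ext q
  simp [E1, ellipticMoment]

section Qp

variable {p : ℝ}

lemma neg_one_lt_neg_one_div (hp : 1 < p) : -1 < -(1 / p) := by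
  rw [neg_lt_neg_iff, div_lt_one (by linarith)]
  exact hp

lemma hasDerivAt_Qp (hp : 1 < p) {q : ℝ} (hq : |q| < 1 / 2) :
    HasDerivAt (Qp p) (q * (-2 * (ellipticMoment (-(1 / p)) (1 / 2 - 1) 2 q * K1 p q +
      E1 p q * ellipticMoment (-(1 / p)) (-(1 / 2) - 1) 2 q) / K1 p q ^ 2)) q := by
  have ha := neg_one_lt_neg_one_div hp
  have hK := hasDerivAt_ellipticMoment ha (-(1 / 2)) 0 hq
  have hE := hasDerivAt_ellipticMoment ha (1 / 2) 0 hq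
  rw [← K1_eq_ellipticMoment] at hK
  rw [← E1_eq_ellipticMoment] at hE
  have hK0 : K1 p q ≠ 0 := by
    rw [K1_eq_ellipticMoment]
    exact (ellipticMoment_pos ha _ 0 hq).ne'
  exact (((hE.const_mul 2).div hK hK0).sub_const 1).congr_deriv (by ring)

lemma iteratedDeriv_two_Qp_zero (hp : 1 < p) :
    iteratedDeriv 2 (Qp p) 0 = 4 * p / (2 - 3 * p) := by
  have ha := neg_one_lt_neg_one_div hp
  have hcont (e : ℝ) (k : ℕ) : ContinuousAt (ellipticMoment (-(1 / p)) e k) 0 :=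
    (hasDerivAt_ellipticMoment ha e k (by norm_num)).continuousAt
  have hK0 : ellipticMoment (-(1 / p)) (-(1 / 2)) 0 0 ^ 2 ≠ 0 :=
    pow_ne_zero 2 (ellipticMoment_pos ha _ 0 (by norm_num)).ne'
  have hB : ∫ z in (0:ℝ)..1, z ^ 2 * (1 - z ^ 2) ^ (-(1 / p)) ≠ 0 := by
    rw [← ellipticMoment_at_zero _ 0]
    exact (ellipticMoment_pos ha 0 2 (by norm_num)).ne'
  rw [iteratedDeriv_two_eq_of_hasDerivAt_mul (f := Qp p)
    (eventually_abs_sub_lt 0 (by norm_num : (0:ℝ) < 1 / 2) |>.mono fun q hq =>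
      hasDerivAt_Qp hp (by simpa using hq))
    (by simp only [K1_eq_ellipticMoment, E1_eq_ellipticMoment]; fun_prop (disch := exact hK0))]
  simp only [K1_eq_ellipticMoment, E1_eq_ellipticMoment, ellipticMoment_at_zero, pow_zero, one_mul]
  rw [integral_one_sub_sq_rpow ha]
  have hp0 : p ≠ 0 := by linarith
  have h3p : 3 * p - 2 ≠ 0 := by linarith
  rw [show 2 * -(1 / p) + 3 = (3 * p - 2) / p by field_simp; ring,
    show 2 - 3 * p = -(3 * p - 2) by ring]
  field_simp
  ring

end Qp

theorem Qp_secondDeriv_at_zero :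
    (∀ p ∈ Set.Ioi (1:ℝ), iteratedDeriv 2 (Qp p) 0 = 4 * p / (2 - 3 * p)) ∧
    (∀ p ∈ Set.Ioi (1:ℝ), iteratedDeriv 2 (Qp p) 0 < 0) ∧
    StrictMonoOn (fun p => iteratedDeriv 2 (Qp p) 0) (Set.Ioi (1:ℝ)) := by
  refine ⟨fun p hp => iteratedDeriv_two_Qp_zero hp, fun p hp => ?_, fun p hp r hr hpr => ?_⟩
  · rw [iteratedDeriv_two_Qp_zero hp]
    exact div_neg_of_pos_of_neg (by linarith [mem_Ioi.1 hp]) (by linarith [mem_Ioi.1 hp])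
  · simp only [iteratedDeriv_two_Qp_zero hp, iteratedDeriv_two_Qp_zero hr]
    have hp' : 2 - 3 * p < 0 := by linarith [mem_Ioi.1 hp]
    have hr' : 2 - 3 * r < 0 := by linarith [mem_Ioi.1 hr]
    rw [← sub_pos, div_sub_div _ _ hr'.ne hp'.ne]
    exact div_pos (by linarith) (mul_pos_of_neg_of_neg hr' hp')
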